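/- Let f be a continuous 2π-periodic function, k ≥ 1, s ≥ 1, and 0 < skh < π. Then sup_{x∈T} |w_{x,h,2k}^s f| ≤ C(2k,k)^{−1} · ω_{2k}(f, sh). -/

import Mathlib

open scoped Real BigOperators
open MeasureTheory

noncomputable section

/-- Representative of `x` in `[-π, π)` on the circle `ℝ/2πℤ`. -/
def rep (x : ℝ) : ℝ := x - 2 * Real.pi * ⌊(x + Real.pi) / (2 * Real.pi)⌋

/-- The basic averaging kernel `B_h^1` on the circle: `1/(2h)` on `[-h,h]`, `0` elsewhere. -/
def B1 (h : ℝ) (x : ℝ) : ℝ := if |rep x| ≤ h then 1 / (2 * h) else 0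

/-- Convolution of real functions over the circle: `(f*g)(x) = ∫_T f(u) g(x-u) du`. -/
def convR (f g : ℝ → ℝ) (x : ℝ) : ℝ := ∫ u in (-Real.pi)..Real.pi, f u * g (x - u)

/-- The iterated kernels `B_h^s`, with `B_h^1 = B1 h` and `B_h^s = B_h^1 * B_h^{s-1}`. -/
def B (h : ℝ) : ℕ → ℝ → ℝ
  | 0 => fun _ => 0
  | 1 => B1 h
  | (s + 2) => convR (B1 h) (B h (s + 1))

/-- Convolution `(f * g)(x) = ∫_T f(u) g(x-u) du` of a complex function `f`
with a real kernel `g`. -/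
def convC (g : ℝ → ℝ) (f : ℝ → ℂ) (x : ℝ) : ℂ :=
  ∫ u in (-Real.pi)..Real.pi, f u * (g (x - u) : ℂ)

/-- The operators `I_{x,δ}^s f`: `I_{x,δ}^0 f = f(x)`, `I_{x,0}^s f = f(x)` (identity),
and `I_{x,δ}^s f = (f * B_{|δ|}^s)(x)` otherwise (so that `I_{x,-δ}^s = I_{x,δ}^s`). -/
def Iop (x δ : ℝ) (s : ℕ) (f : ℝ → ℂ) : ℂ :=
  if s = 0 ∨ δ = 0 then f x else convC (B |δ| s) f x

/-- The smoothing operator `w_{x,h,2k}^s f = Σ_{i=0}^{2k} (-1)^{k-i} (C(2k,i)/C(2k,k)) I_{x,(i-k)h}^s f`. -/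
def wop (x h : ℝ) (k s : ℕ) (f : ℝ → ℂ) : ℂ :=
  ∑ i ∈ Finset.range (2 * k + 1),
    ((-1 : ℂ) ^ ((k : ℤ) - (i : ℤ))) *
      ((Nat.choose (2 * k) i : ℂ) / (Nat.choose (2 * k) k : ℂ)) *
        Iop x (((i : ℝ) - (k : ℝ)) * h) s f

/-- The `m`-th difference of a complex-valued `f` at `x` with step `h`:
`Δ_h^m f(x) = Σ_{i=0}^m (-1)^{m-i} C(m,i) f(x - (m/2)h + ih)`. -/
def deltaC (m : ℕ) (h : ℝ) (f : ℝ → ℂ) (x : ℝ) : ℂ :=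
  ∑ i ∈ Finset.range (m + 1),
    ((-1 : ℂ) ^ (m - i)) * (Nat.choose m i : ℂ) * f (x - ((m : ℝ) / 2) * h + (i : ℝ) * h)

/-- The `m`-th difference of a real-valued `g` at `x` with step `h`. -/
def deltaR (m : ℕ) (h : ℝ) (g : ℝ → ℝ) (x : ℝ) : ℝ :=
  ∑ i ∈ Finset.range (m + 1),
    ((-1 : ℝ) ^ (m - i)) * (Nat.choose m i : ℝ) * g (x - ((m : ℝ) / 2) * h + (i : ℝ) * h)

/-- Sup norm `‖f‖ = sup_{x ∈ T} |f(x)|`. -/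
def supNorm (f : ℝ → ℂ) : ℝ := sSup {y : ℝ | ∃ x : ℝ, y = ‖f x‖}

/-- The `m`-th modulus of smoothness `ω_m(f,δ) = sup_{x, |h|<δ} |Δ_h^m f(x)|`. -/
def modulus (m : ℕ) (f : ℝ → ℂ) (δ : ℝ) : ℝ :=
  sSup {y : ℝ | ∃ x h : ℝ, |h| < δ ∧ y = ‖deltaC m h f x‖}

/-- `τ` is a trigonometric polynomial of degree at most `n`. -/
def IsTrigPoly (n : ℕ) (τ : ℝ → ℂ) : Prop :=
  ∃ c : ℤ → ℂ, ∀ t : ℝ,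
    τ t = ∑ j ∈ Finset.Icc (-(n : ℤ)) (n : ℤ), c j * Complex.exp ((j : ℂ) * t * Complex.I)

/-- The best uniform approximation `E_n(f) = inf_{τ ∈ T_n} ‖f - τ‖`. -/
def E (n : ℕ) (f : ℝ → ℂ) : ℝ :=
  sInf {y : ℝ | ∃ τ : ℝ → ℂ, IsTrigPoly n τ ∧ y = supNorm (fun x => f x - τ x)}

/-- The `j`-th Fourier coefficient `ĉ_j(f) = (1/2π) ∫_T f(u) e^{-iju} du`. -/
def fc (f : ℝ → ℂ) (j : ℤ) : ℂ :=
  (1 / (2 * (Real.pi : ℂ))) * ∫ u in (-Real.pi)..Real.pi,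
    f u * Complex.exp (-(j : ℂ) * (u : ℂ) * Complex.I)

/-- The `i`-th partial Fourier sum `s_i f(x) = Σ_{|j| ≤ i} ĉ_j(f) e^{ijx}`. -/
def PS (i : ℕ) (f : ℝ → ℂ) (x : ℝ) : ℂ :=
  ∑ j ∈ Finset.Icc (-(i : ℤ)) (i : ℤ), fc f j * Complex.exp ((j : ℂ) * (x : ℂ) * Complex.I)

/-- The Fejér mean `σ_j f = (1/(j+1)) Σ_{i=0}^j s_i f`. -/
def Fej (j : ℕ) (f : ℝ → ℂ) (x : ℝ) : ℂ :=
  (1 / ((j : ℂ) + 1)) * ∑ i ∈ Finset.range (j + 1), PS i f x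

/-- The de la Vallée Poussin mean `v_{k,m} f = (1/m) Σ_{i=km}^{(k+1)m-1} s_i f`. -/
def VP (k m : ℕ) (f : ℝ → ℂ) (x : ℝ) : ℂ :=
  (1 / (m : ℂ)) * ∑ i ∈ Finset.Ico (k * m) ((k + 1) * m), PS i f x

/-- `α = 2^{-5/2} 3^{1/2} π`. -/
def alpha : ℝ := (2 : ℝ) ^ (-(5 / 2 : ℝ)) * Real.sqrt 3 * Real.pi

/-- The `L¹` norm on the circle of a complex function. -/
def L1C (g : ℝ → ℂ) : ℝ := ∫ u in (-Real.pi)..Real.pi, ‖g u‖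

/-- The `L¹` norm on the circle of a real function. -/
def L1R (g : ℝ → ℝ) : ℝ := ∫ u in (-Real.pi)..Real.pi, |g u|

/-!
For `0 < |δ| < π` the kernel `B_{|δ|}^1`, restricted to `[-π, π]`, is `(2|δ|)⁻¹` times the
indicator of `[-|δ|, |δ|]`. Together with Fubini (associativity of the convolution) this turns
`I_{x,δ}^s f` into the `s`-fold iterate of the average `g ↦ ½ ∫_{-1}^{1} g(· - δt) dt`.
Averaging commutes with the finite combination defining `w`, and with the steps `δ = (i - k)h`
the combination of the translates `f(x - (i - k)h c)` is `±Δ_{-hc}^{2k} f(x)`. So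
`C(2k,k) w_{x,h,2k}^s f` is an average, over `t ∈ [-1,1]^s`, of `2k`-th differences with steps
`h(t₁ + ⋯ + t_s)`, all of size at most `sh`.
-/

open Set

lemma abs_rep_of_mem_Icc {x : ℝ} (hx : x ∈ Icc (-π) π) : |rep x| = |x| := by
  have hπ := Real.pi_pos
  rcases hx.2.lt_or_eq with hlt | rfl
  · have : ⌊(x + π) / (2 * π)⌋ = 0 := by
      rw [Int.floor_eq_zero_iff]
      constructor
      · exact div_nonneg (by linarith [hx.1]) (by positivity)
      · rw [div_lt_one (by positivity)]; linarith
    simp [rep, this]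
  · have : ⌊(π + π) / (2 * π)⌋ = 1 := by
      rw [show (π + π) / (2 * π) = 1 by field_simp; ring, Int.floor_one]
    simp only [rep, this]
    rw [show π - 2 * π * ((1 : ℤ) : ℝ) = -π by push_cast; ring, abs_neg]

lemma rep_periodic : Function.Periodic rep (2 * π) := by
  intro x
  have h : (x + 2 * π + π) / (2 * π) = (x + π) / (2 * π) + 1 := by
    field_simp [Real.pi_ne_zero]; ring
  simp only [rep, h, Int.floor_add_one]
  push_cast
  ring

lemma B1_periodic (h : ℝ) : Function.Periodic (B1 h) (2 * π) := by
  intro x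
  simp only [B1, rep_periodic x]

lemma measurable_B1 (h : ℝ) : Measurable (B1 h) := by
  refine Measurable.ite (measurableSet_le ?_ measurable_const) measurable_const measurable_const
  exact (measurable_id.sub (measurable_const.mul
    (measurable_from_top.comp ((measurable_id.add_const _).div_const _).floor))).abs

lemma abs_B1_le (h x : ℝ) : |B1 h x| ≤ |1 / (2 * h)| := by
  unfold B1
  split_ifs <;> simp

lemma B1_eq_of_mem_Icc {h x : ℝ} (hx : x ∈ Icc (-π) π) :
    B1 h x = (Icc (-h) h).indicator (fun _ => 1 / (2 * h)) x := by
  simp only [B1, abs_rep_of_mem_Icc hx, indicator, mem_Icc, ← abs_le]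

lemma integral_B1_mul {h : ℝ} (h0 : 0 < h) (hπ : h < π) (g : ℝ → ℂ) :
    ∫ v in (-π)..π, (B1 h v : ℂ) * g v = 2⁻¹ * ∫ t in (-1 : ℝ)..1, g (h * t) := by
  have hsub : Icc (-h) h ⊆ Ioc (-π) π := Icc_subset_Ioc (by linarith) hπ.le
  calc ∫ v in (-π)..π, (B1 h v : ℂ) * g v
      = ∫ v in Ioc (-π) π, (Icc (-h) h).indicator (fun v => ((1 / (2 * h) : ℝ) : ℂ) * g v) v := by
        rw [intervalIntegral.integral_of_le (by linarith [Real.pi_pos])]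
        refine setIntegral_congr_fun measurableSet_Ioc fun v hv => ?_
        rw [B1_eq_of_mem_Icc (Ioc_subset_Icc_self hv)]
        by_cases hvh : v ∈ Icc (-h) h <;> simp [hvh]
    _ = ∫ v in (-h)..h, ((1 / (2 * h) : ℝ) : ℂ) * g v := by
        rw [setIntegral_indicator measurableSet_Icc, inter_eq_right.mpr hsub,
          integral_Icc_eq_integral_Ioc, ← intervalIntegral.integral_of_le (by linarith)]
    _ = 2⁻¹ * ∫ t in (-1 : ℝ)..1, g (h * t) := by
        rw [intervalIntegral.integral_comp_mul_left g h0.ne', mul_neg_one, mul_one,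
          intervalIntegral.integral_const_mul, Complex.real_smul]
        push_cast
        field_simp

lemma measurable_convR {a b : ℝ → ℝ} (ha : Measurable a) (hb : Measurable b) :
    Measurable (convR a b) := by
  have hrw : convR a b = fun x => ∫ u in Ioc (-π) π, a u * b (x - u) := by
    funext x
    rw [convR, intervalIntegral.integral_of_le (by linarith [Real.pi_pos])]
  rw [hrw]
  exact ((ha.comp measurable_snd).mul (hb.comp (measurable_fst.sub measurable_snd)))
    |>.stronglyMeasurable.integral_prod_right'.measurable

lemma abs_convR_le {a b : ℝ → ℝ} {Ca Cb : ℝ} (ha : ∀ x, |a x| ≤ Ca) (hb : ∀ x, |b x| ≤ Cb)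
    (x : ℝ) : |convR a b x| ≤ Ca * Cb * (2 * π) := by
  have hCa : 0 ≤ Ca := (abs_nonneg _).trans (ha 0)
  rw [← Real.norm_eq_abs,
    show 2 * π = |π - -π| by rw [abs_of_pos (by linarith [Real.pi_pos])]; ring]
  refine intervalIntegral.norm_integral_le_of_norm_le_const fun u _ => ?_
  rw [Real.norm_eq_abs, abs_mul]
  exact mul_le_mul (ha u) (hb _) (abs_nonneg _) hCa

lemma measurable_B (h : ℝ) : ∀ s, Measurable (B h s)
  | 0 => measurable_const
  | 1 => measurable_B1 h
  | s + 2 => measurable_convR (measurable_B1 h) (measurable_B h (s + 1))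

lemma exists_abs_B_le (h : ℝ) : ∀ s, ∃ C, ∀ x, |B h s x| ≤ C
  | 0 => ⟨0, fun _ => by simp [B]⟩
  | 1 => ⟨_, abs_B1_le h⟩
  | s + 2 => by
    obtain ⟨C, hC⟩ := exists_abs_B_le h (s + 1)
    exact ⟨_, abs_convR_le (abs_B1_le h) hC⟩

lemma integral_comp_sub_of_periodic {F : ℝ → ℂ} (hF : Function.Periodic F (2 * π)) (x : ℝ) :
    ∫ u in (-π)..π, F (x - u) = ∫ u in (-π)..π, F u := by
  rw [intervalIntegral.integral_comp_sub_left F x, sub_neg_eq_add,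
    show x + π = x - π + 2 * π by ring, hF.intervalIntegral_add_eq (x - π) (-π), show -π + 2 * π = π by ring]

lemma convC_convR {a b : ℝ → ℝ} {f : ℝ → ℂ} (ha : Measurable a) (hb : Measurable b)
    (hf : Measurable f) {Ca Cb M : ℝ} (ha' : ∀ x, |a x| ≤ Ca) (hb' : ∀ x, |b x| ≤ Cb)
    (hM : ∀ x, ‖f x‖ ≤ M) (x : ℝ) :
    convC (convR a b) f x = ∫ v in (-π)..π, (a v : ℂ) * convC b f (x - v) := by
  have hππ : -π ≤ π := by linarith [Real.pi_pos]
  set μ := volume.restrict (Ioc (-π) π)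
  have : IsFiniteMeasure μ := ⟨by simp [μ]⟩
  have hint : Integrable (Function.uncurry fun u v => f u * (a v : ℂ) * (b (x - u - v) : ℂ))
      (μ.prod μ) := by
    refine Integrable.mono' (integrable_const (M * Ca * Cb)) ?_ (ae_of_all _ fun p => ?_)
    · refine Measurable.aestronglyMeasurable ?_
      exact (hf.comp measurable_fst).mul (Complex.measurable_ofReal.comp (ha.comp measurable_snd))
        |>.mul (Complex.measurable_ofReal.comp
          (hb.comp ((measurable_const.sub measurable_fst).sub measurable_snd)))
    · simp only [Function.uncurry, norm_mul, Complex.norm_real, Real.norm_eq_abs]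
      have hM0 : 0 ≤ M := (norm_nonneg _).trans (hM 0)
      have hCa : 0 ≤ Ca := (abs_nonneg _).trans (ha' 0)
      gcongr
      exacts [hM _, ha' _, hb' _]
  calc convC (convR a b) f x
      = ∫ u in Ioc (-π) π, ∫ v in Ioc (-π) π, f u * (a v : ℂ) * (b (x - u - v) : ℂ) := by
        simp only [convC, convR, intervalIntegral.integral_of_le hππ]
        refine setIntegral_congr_fun measurableSet_Ioc fun u _ => ?_
        rw [← integral_complex_ofReal, ← MeasureTheory.integral_const_mul]
        simp only [Complex.ofReal_mul, mul_assoc]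
    _ = ∫ v in Ioc (-π) π, ∫ u in Ioc (-π) π, f u * (a v : ℂ) * (b (x - u - v) : ℂ) :=
        integral_integral_swap hint
    _ = ∫ v in (-π)..π, (a v : ℂ) * convC b f (x - v) := by
        simp only [convC, intervalIntegral.integral_of_le hππ, ← MeasureTheory.integral_const_mul]
        refine setIntegral_congr_fun measurableSet_Ioc fun v _ => ?_
        refine integral_congr_ae (ae_of_all _ fun u => ?_)
        simp only [sub_right_comm x u v]
        ring

def intervalAvg (δ : ℝ) (g : ℝ → ℂ) (x : ℝ) : ℂ := 2⁻¹ * ∫ t in (-1 : ℝ)..1, g (x - δ * t)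

lemma intervalAvg_zero : intervalAvg 0 = id := by
  funext g x
  simp only [intervalAvg, id, zero_mul, sub_zero, intervalIntegral.integral_const,
    Complex.real_smul]
  push_cast
  ring

lemma intervalAvg_abs (δ : ℝ) (g : ℝ → ℂ) : intervalAvg |δ| g = intervalAvg δ g := by
  rcases abs_choice δ with hδ | hδ
  · rw [hδ]
  · funext x
    have h := intervalIntegral.integral_comp_neg (a := -1) (b := 1) (fun t => g (x - δ * t))
    simp only [neg_neg] at h
    simp only [intervalAvg, hδ, neg_mul, ← mul_neg, h]

lemma Continuous.intervalAvg {g : ℝ → ℂ} (hg : Continuous g) (δ : ℝ) :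
    Continuous (intervalAvg δ g) :=
  continuous_const.mul <| intervalIntegral.continuous_parametric_intervalIntegral_of_continuous'
    (by fun_prop) _ _

lemma Iop_succ {f : ℝ → ℂ} (hf : Continuous f) (hper : Function.Periodic f (2 * π)) {δ : ℝ}
    (hδ : δ ≠ 0) (s : ℕ) (x : ℝ) :
    Iop x δ (s + 1) f = ∫ v in (-π)..π, (B1 |δ| v : ℂ) * Iop (x - v) δ s f := by
  rw [Iop, if_neg (by simp [hδ])]
  rcases s with _ | n
  · have hF : Function.Periodic (fun v => (B1 |δ| v : ℂ) * f (x - v)) (2 * π) := fun v => by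
      simp only [B1_periodic |δ| v, sub_add_eq_sub_sub, hper.sub_eq]
    simp only [Iop, true_or, if_true, convC, B, ← integral_comp_sub_of_periodic hF x,
      sub_sub_cancel, mul_comm]
  · obtain ⟨M, hM⟩ := (hper.isBounded_of_continuous Real.two_pi_pos.ne' hf).exists_norm_le
    obtain ⟨C, hC⟩ := exists_abs_B_le |δ| (n + 1)
    simp only [Iop, if_neg (show ¬(n + 1 = 0 ∨ δ = 0) by simp [hδ])]
    exact convC_convR (measurable_B1 _) (measurable_B _ _) hf.measurable (abs_B1_le _) hC
      (fun y => hM _ (mem_range_self y)) x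

lemma Iop_eq_iterate_intervalAvg {f : ℝ → ℂ} (hf : Continuous f)
    (hper : Function.Periodic f (2 * π)) {δ : ℝ} (hδ : |δ| < π) (s : ℕ) (x : ℝ) :
    Iop x δ s f = (intervalAvg δ)^[s] f x := by
  rcases eq_or_ne δ 0 with rfl | hδ0
  · simp [Iop, intervalAvg_zero]
  induction s generalizing x with
  | zero => simp [Iop]
  | succ s ih =>
    simp only [Iop_succ hf hper hδ0, ih, Function.iterate_succ_apply',
      integral_B1_mul (abs_pos.mpr hδ0) hδ, ← intervalAvg_abs δ]
    rfl

lemma continuous_iterate_intervalAvg {f : ℝ → ℂ} (hf : Continuous f) (δ : ℝ) (n : ℕ) :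
    Continuous ((intervalAvg δ)^[n] f) := by
  induction n with
  | zero => exact hf
  | succ n ih => rw [Function.iterate_succ_apply']; exact ih.intervalAvg δ

lemma norm_sum_iterate_intervalAvg_le {ι : Type*} (S : Finset ι) (a : ι → ℂ) (δ : ι → ℝ)
    {f : ℝ → ℂ} (hf : Continuous f) (x : ℝ) {r C : ℝ}
    (hC : ∀ c, |c| ≤ r → ‖∑ i ∈ S, a i * f (x - δ i * c)‖ ≤ C) (n : ℕ) (c : ℝ)
    (hc : n + |c| ≤ r) :
    ‖∑ i ∈ S, a i * (intervalAvg (δ i))^[n] f (x - δ i * c)‖ ≤ C := by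
  induction n generalizing c with
  | zero => simpa using hC c (by simpa using hc)
  | succ n ih =>
    have hsum : ∑ i ∈ S, a i * (intervalAvg (δ i))^[n + 1] f (x - δ i * c) =
        2⁻¹ * ∫ t in (-1 : ℝ)..1,
          ∑ i ∈ S, a i * (intervalAvg (δ i))^[n] f (x - δ i * (c + t)) := by
      have hint : ∀ i ∈ S, IntervalIntegrable
          (fun t => a i * (intervalAvg (δ i))^[n] f (x - δ i * (c + t))) volume (-1) 1 :=
        fun i _ => (continuous_const.mul ((continuous_iterate_intervalAvg hf _ n).comp
          (by fun_prop))).intervalIntegrable _ _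
      rw [intervalIntegral.integral_finsetSum hint, Finset.mul_sum]
      refine Finset.sum_congr rfl fun i _ => ?_
      simp only [Function.iterate_succ_apply', intervalAvg, intervalIntegral.integral_const_mul,
        mul_add, sub_sub]
      ring
    have hbound : ‖∫ t in (-1 : ℝ)..1,
        ∑ i ∈ S, a i * (intervalAvg (δ i))^[n] f (x - δ i * (c + t))‖ ≤ C * |1 - (-1 : ℝ)| :=
      intervalIntegral.norm_integral_le_of_norm_le_const fun t ht => by
        rw [uIoc_of_le (by norm_num), mem_Ioc] at ht
        refine ih (c + t) ?_
        have := abs_add_le c t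
        have := abs_le.mpr ⟨ht.1.le, ht.2⟩
        push_cast at hc
        linarith
    rw [hsum, norm_mul]
    norm_num at hbound ⊢
    linarith

lemma norm_deltaC_le {f : ℝ → ℂ} {M : ℝ} (hM : ∀ x, ‖f x‖ ≤ M) (m : ℕ) (u x : ℝ) :
    ‖deltaC m u f x‖ ≤ 2 ^ m * M := by
  calc ‖deltaC m u f x‖
      ≤ ∑ i ∈ Finset.range (m + 1), (m.choose i : ℝ) * M := by
        refine (norm_sum_le _ _).trans (Finset.sum_le_sum fun i _ => ?_)
        simp only [norm_mul, norm_pow, norm_neg, norm_one, one_pow, one_mul, Complex.norm_natCast]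
        gcongr
        exact hM _
    _ = 2 ^ m * M := by
        rw [← Finset.sum_mul, ← Nat.cast_sum, Nat.sum_range_choose]
        push_cast
        rfl

lemma modulus_nonneg (m : ℕ) (f : ℝ → ℂ) (δ : ℝ) : 0 ≤ modulus m f δ :=
  Real.sSup_nonneg fun _ ⟨_, _, _, hy⟩ => hy ▸ norm_nonneg _

lemma norm_deltaC_le_modulus {f : ℝ → ℂ} (hf : Continuous f) {M : ℝ} (hM : ∀ x, ‖f x‖ ≤ M)
    (m : ℕ) (x : ℝ) {δ u : ℝ} (hδ : 0 < δ) (hu : |u| ≤ δ) :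
    ‖deltaC m u f x‖ ≤ modulus m f δ := by
  have hbdd : BddAbove {y : ℝ | ∃ x u : ℝ, |u| < δ ∧ y = ‖deltaC m u f x‖} :=
    ⟨2 ^ m * M, fun _ ⟨x, u, _, hy⟩ => hy ▸ norm_deltaC_le hM m u x⟩
  have hclosed : IsClosed {v : ℝ | ‖deltaC m v f x‖ ≤ modulus m f δ} :=
    isClosed_le (continuous_finsetSum _ fun i _ => by fun_prop).norm
      continuous_const
  -- `ω_m` uses the open range `|u| < δ`; the endpoints are reached by continuity in `u`.
  have hopen : Ioo (-δ) δ ⊆ {v : ℝ | ‖deltaC m v f x‖ ≤ modulus m f δ} := fun v hv =>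
    le_csSup hbdd ⟨x, v, abs_lt.mpr hv, rfl⟩
  have := closure_minimal hopen hclosed
  rw [closure_Ioo (by linarith)] at this
  exact this (abs_le.mp hu)

lemma neg_one_zpow_sub_eq {k i : ℕ} (hi : i ≤ 2 * k) :
    (-1 : ℂ) ^ ((k : ℤ) - i) = (-1) ^ k * (-1) ^ (2 * k - i) := by
  have hexp : ((k + (2 * k - i) : ℕ) : ℤ) = ((k : ℤ) - i) + 2 * k := by
    push_cast [Nat.cast_sub hi]
    ring
  rw [← pow_add, ← zpow_natCast, hexp, zpow_add₀ (by norm_num), zpow_mul]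
  simp

lemma sum_neg_one_zpow_mul_choose_eq_deltaC (k : ℕ) (g : ℝ → ℂ) (x u : ℝ) :
    ∑ i ∈ Finset.range (2 * k + 1),
        (-1 : ℂ) ^ ((k : ℤ) - i) * ((2 * k).choose i : ℂ) * g (x - ((i : ℝ) - k) * u) =
      (-1) ^ k * deltaC (2 * k) (-u) g x := by
  rw [deltaC, Finset.mul_sum]
  refine Finset.sum_congr rfl fun i hi => ?_
  rw [neg_one_zpow_sub_eq (Nat.lt_succ_iff.mp (Finset.mem_range.mp hi))]
  push_cast
  ring_nf

lemma wop_eq_sum_iterate_intervalAvg {f : ℝ → ℂ} (hf : Continuous f)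
    (hper : Function.Periodic f (2 * π)) {k s : ℕ} {h : ℝ} (hkh : k * |h| < π) (x : ℝ) :
    wop x h k s f = ((2 * k).choose k : ℂ)⁻¹ * ∑ i ∈ Finset.range (2 * k + 1),
      (-1 : ℂ) ^ ((k : ℤ) - i) * ((2 * k).choose i : ℂ) *
        (intervalAvg (((i : ℝ) - k) * h))^[s] f x := by
  rw [wop, Finset.mul_sum]
  refine Finset.sum_congr rfl fun i hi => ?_
  have hi' : (i : ℝ) ≤ 2 * k := by exact_mod_cast Nat.lt_succ_iff.mp (Finset.mem_range.mp hi)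
  have hδ : |((i : ℝ) - k) * h| < π := by
    refine lt_of_le_of_lt ?_ hkh
    rw [abs_mul]
    gcongr
    rw [abs_le]
    constructor <;> linarith [(Nat.cast_nonneg i : (0 : ℝ) ≤ i)]
  rw [Iop_eq_iterate_intervalAvg hf hper hδ]
  ring

theorem stmt8_general (f : ℝ → ℂ) (hf : Continuous f) (hper : Function.Periodic f (2 * Real.pi))
    (k s : ℕ) (hs : 1 ≤ s) (h : ℝ) (hpos : 0 < (s : ℝ) * (k : ℝ) * h)
    (hlt : (s : ℝ) * (k : ℝ) * h < Real.pi) :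
    sSup {y : ℝ | ∃ x : ℝ, y = ‖wop x h k s f‖} ≤
      ((Nat.choose (2 * k) k : ℝ))⁻¹ * modulus (2 * k) f ((s : ℝ) * h) := by
  have hh : 0 < h := pos_of_mul_pos_right hpos (by positivity)
  have hkh : (k : ℝ) * |h| < π := by
    refine lt_of_le_of_lt ?_ hlt
    rw [abs_of_pos hh, mul_assoc]
    exact le_mul_of_one_le_left (by positivity) (by exact_mod_cast hs)
  obtain ⟨M, hM⟩ := (hper.isBounded_of_continuous Real.two_pi_pos.ne' hf).exists_norm_le
  have hdiff : ∀ x (c : ℝ), |c| ≤ s → ‖∑ i ∈ Finset.range (2 * k + 1),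
      (-1 : ℂ) ^ ((k : ℤ) - i) * ((2 * k).choose i : ℂ) * f (x - ((i : ℝ) - k) * h * c)‖ ≤
        modulus (2 * k) f (s * h) := by
    intro x c hc
    simp only [mul_assoc _ h c, sum_neg_one_zpow_mul_choose_eq_deltaC, norm_mul, norm_pow,
      norm_neg, norm_one, one_pow, one_mul]
    refine norm_deltaC_le_modulus hf (fun y => hM _ (mem_range_self y)) _ x (by positivity) ?_
    rw [abs_neg, abs_mul, abs_of_pos hh, mul_comm (s : ℝ)]
    gcongr
  refine Real.sSup_le ?_ (mul_nonneg (by positivity) (modulus_nonneg _ _ _))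
  rintro _ ⟨x, rfl⟩
  rw [wop_eq_sum_iterate_intervalAvg hf hper hkh, norm_mul, norm_inv, Complex.norm_natCast]
  gcongr
  simpa using norm_sum_iterate_intervalAvg_le _ _ (fun i : ℕ => ((i : ℝ) - k) * h) hf x (hdiff x)
    s 0 (by simp)

/-- Bound on the smoothing operator: `sup_x |w_{x,h,2k}^s f| ≤ C(2k,k)⁻¹ ω_{2k}(f, sh)`. -/
theorem stmt8 (f : ℝ → ℂ) (hf : Continuous f) (hper : Function.Periodic f (2 * Real.pi))
    (k s : ℕ) (hk : 1 ≤ k) (hs : 1 ≤ s) (h : ℝ) (hpos : 0 < (s : ℝ) * (k : ℝ) * h)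
    (hlt : (s : ℝ) * (k : ℝ) * h < Real.pi) :
    sSup {y : ℝ | ∃ x : ℝ, y = ‖wop x h k s f‖} ≤
      ((Nat.choose (2 * k) k : ℝ))⁻¹ * modulus (2 * k) f ((s : ℝ) * h) :=
  stmt8_general f hf hper k s hs h hpos hlt
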